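/- arXiv:2108.01735 — 2 statements merged into one kernel-verified Lean document; each statement's English description precedes it below -/
import Mathlib

section
/- Let ρ, ρ* ∈ ℂ^N, e = ρ - ρ* ≠ 0, and suppose v = t/‖t‖ with t = αρ + (1-α)ρ* is an eigenvector of E = ρρ^H - ρ*ρ*^H with nonzero eigenvalue λ = e^H t. Then α satisfies the quadratic equation ‖e‖² α² + (e^H ρ* - ρ^H e) α - ρ^H ρ* = 0. -/
noncomputable def toE {n : ℕ} (v : Fin n → ℂ) : EuclideanSpace ℂ (Fin n) :=
  (WithLp.equiv 2 (Fin n → ℂ)).symm v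

noncomputable def ofE {n : ℕ} (v : EuclideanSpace ℂ (Fin n)) : Fin n → ℂ :=
  WithLp.equiv 2 (Fin n → ℂ) v

/-- Outer product `x yᴴ` of two vectors. -/
noncomputable def outer {n : ℕ} (x y : EuclideanSpace ℂ (Fin n)) : Matrix (Fin n) (Fin n) ℂ :=
  Matrix.vecMulVec (ofE x) (star (ofE y))

/-- Spectral (ℓ₂ operator) norm of a square complex matrix. -/
noncomputable def specNorm {n : ℕ} (A : Matrix (Fin n) (Fin n) ℂ) : ℝ :=
  ‖Matrix.toEuclideanCLM (𝕜 := ℂ) (n := Fin n) A‖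

/-- Frobenius norm of a square complex matrix. -/
noncomputable def frobNorm {n : ℕ} (A : Matrix (Fin n) (Fin n) ℂ) : ℝ :=
  Real.sqrt (∑ i, ∑ j, ‖A i j‖ ^ 2)

/-!
With `λ = ⟪e, t⟫ = ⟪ρ, t⟫ - ⟪ρ*, t⟫`, the eigen-equation `⟪ρ, t⟫ ρ - ⟪ρ*, t⟫ ρ* = λ t` for
`t = ρ* + α e` becomes `⟪ρ, t⟫ e + λ ρ* = λ α e + λ ρ*`, so `⟪ρ, t⟫ = λ α` because `e ≠ 0`.
Expanding `⟪ρ, t⟫ = ⟪ρ, ρ*⟫ + α ⟪ρ, e⟫` and `λ = ⟪e, ρ*⟫ + α ‖e‖²` gives the quadratic.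
-/

open scoped InnerProductSpace

theorem toE_outer_sub_outer_mulVec {n : ℕ} (a b v : EuclideanSpace ℂ (Fin n)) :
    toE ((outer a a - outer b b).mulVec (ofE v)) = ⟪a, v⟫_ℂ • a - ⟪b, v⟫_ℂ • b := by
  ext i
  simp [toE, ofE, outer, Matrix.sub_mulVec, Matrix.vecMulVec_mulVec,
    EuclideanSpace.inner_eq_star_dotProduct, dotProduct_comm]

section

variable {𝕜 E : Type*} [RCLike 𝕜] [NormedAddCommGroup E] [InnerProductSpace 𝕜 E]

theorem inner_eq_inner_sub_mul_of_eigen {a b t : E} {α : 𝕜} (hab : a ≠ b)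
    (ht : t = α • a + (1 - α) • b)
    (heig : ⟪a, t⟫_𝕜 • a - ⟪b, t⟫_𝕜 • b = ⟪a - b, t⟫_𝕜 • t) :
    ⟪a, t⟫_𝕜 = ⟪a - b, t⟫_𝕜 * α := by
  have h : (⟪a, t⟫_𝕜 - ⟪a - b, t⟫_𝕜 * α) • (a - b) = 0 := by
    rw [inner_sub_left] at heig ⊢
    generalize ⟪a, t⟫_𝕜 = p, ⟪b, t⟫_𝕜 = q at heig ⊢
    subst ht
    linear_combination (norm := module) heig
  simpa [sub_eq_zero, hab] using h

theorem quadratic_of_inner_eq_inner_sub_mul (a b : E) (α : 𝕜)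
    (h : ⟪a, α • a + (1 - α) • b⟫_𝕜 = ⟪a - b, α • a + (1 - α) • b⟫_𝕜 * α) :
    (‖a - b‖ : 𝕜) ^ 2 * α ^ 2 + (⟪a - b, b⟫_𝕜 - ⟪a, a - b⟫_𝕜) * α - ⟪a, b⟫_𝕜 = 0 := by
  have ht : α • a + (1 - α) • b = b + α • (a - b) := by module
  rw [ht, inner_add_right, inner_add_right, inner_smul_right, inner_smul_right,
    inner_self_eq_norm_sq_to_K] at h
  linear_combination -h

end

theorem stmt1_general {N : ℕ} (ρ ρs e t v : EuclideanSpace ℂ (Fin N)) (α lam : ℂ)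
    (he : e = ρ - ρs) (hene : e ≠ 0)
    (ht : t = α • ρ + (1 - α) • ρs) (htne : t ≠ 0)
    (hv : v = (‖t‖ : ℂ)⁻¹ • t)
    (hlam : lam = (inner ℂ e t : ℂ))
    (heig : toE ((outer ρ ρ - outer ρs ρs).mulVec (ofE v)) = lam • v) :
    (‖e‖ : ℂ) ^ 2 * α ^ 2 + ((inner ℂ e ρs : ℂ) - (inner ℂ ρ e : ℂ)) * α - (inner ℂ ρ ρs : ℂ) = 0 := by
  subst he hv hlam
  have hscale : (‖t‖ : ℂ)⁻¹ ≠ 0 := by simpa using htne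
  have heig_t : ⟪ρ, t⟫_ℂ • ρ - ⟪ρs, t⟫_ℂ • ρs = ⟪ρ - ρs, t⟫_ℂ • t := by
    rw [toE_outer_sub_outer_mulVec, inner_smul_right, inner_smul_right] at heig
    refine smul_right_injective _ hscale ?_
    linear_combination (norm := module) heig
  have hρ := inner_eq_inner_sub_mul_of_eigen (sub_ne_zero.mp hene) ht heig_t
  subst ht
  exact quadratic_of_inner_eq_inner_sub_mul ρ ρs α hρ

theorem stmt1 {N : ℕ} (ρ ρs e t v : EuclideanSpace ℂ (Fin N)) (α lam : ℂ)
    (he : e = ρ - ρs) (hene : e ≠ 0)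
    (ht : t = α • ρ + (1 - α) • ρs) (htne : t ≠ 0)
    (hv : v = (‖t‖ : ℂ)⁻¹ • t)
    (hlam : lam = (inner ℂ e t : ℂ)) (hlamne : lam ≠ 0)
    (heig : toE ((outer ρ ρ - outer ρs ρs).mulVec (ofE v)) = lam • v) :
    (‖e‖ : ℂ) ^ 2 * α ^ 2 + ((inner ℂ e ρs : ℂ) - (inner ℂ ρ e : ℂ)) * α - (inner ℂ ρ ρs : ℂ) = 0 :=
  stmt1_general ρ ρs e t v α lam he hene ht htne hv hlam heig
end

section
/- Under the regularity condition Re⟨∇K(y^{(l-1)}), y^{(l-1)} - y*⟩ ≥ (1/α)‖y^{(l-1)} - y*‖² + (1/β)‖∇K(y^{(l-1)})‖² for all iterates, and step sizes γ'_l ∈ [0, 2/β], the iterates y^{(l)} = y^{(l-1)} - γ'_l ∇K(y^{(l-1)}) satisfy ‖y^{(j)} - y*‖² ≤ (∏_{l=1}^{j} (1 - 2γ'_l/α)) ‖y^{(0)} - y*‖² for every j ≥ 1, provided the regularity condition holds at each iterate y^{(l-1)} for l ≤ j. -/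
/-!
Expanding the square, `‖a - r • g‖² = ‖a‖² - 2r Re⟪g, a⟫ + r²‖g‖²`; the regularity condition
bounds `Re⟪g, a⟫` below by `‖a‖²/α + ‖g‖²/β`, and the leftover `r (r - 2/β) ‖g‖²` is
nonpositive for `0 ≤ r ≤ 2/β`. So each step contracts the squared error by `1 - 2γ'_l/α`, and
since these factors are nonnegative the one-step bounds chain into the product bound.
-/

open Finset

theorem le_prod_Icc_mul_of_le_mul {R : Type*} [CommSemiring R] [PartialOrder R] [IsOrderedRing R]
    {u c : ℕ → R} (hc : ∀ l, 0 ≤ c l) (h : ∀ l, u (l + 1) ≤ c (l + 1) * u l) (j : ℕ) :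
    u j ≤ (∏ l ∈ Icc 1 j, c l) * u 0 := by
  induction j with
  | zero => simp
  | succ n ih =>
    calc u (n + 1) ≤ c (n + 1) * u n := h n
      _ ≤ c (n + 1) * ((∏ l ∈ Icc 1 n, c l) * u 0) := mul_le_mul_of_nonneg_left ih (hc _)
      _ = (∏ l ∈ Icc 1 (n + 1), c l) * u 0 := by
        rw [prod_Icc_succ_top (by omega), mul_comm _ (c _), mul_assoc]

theorem norm_sub_smul_sq_le_of_le_re_inner {𝕜 E : Type*} [RCLike 𝕜] [NormedAddCommGroup E]
    [InnerProductSpace 𝕜 E] [Module ℝ E] [IsScalarTower ℝ 𝕜 E] {α β r : ℝ} (hr₀ : 0 ≤ r)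
    (hr : r ≤ 2 / β) {a g : E}
    (hreg : 1 / α * ‖a‖ ^ 2 + 1 / β * ‖g‖ ^ 2 ≤ RCLike.re (inner 𝕜 g a)) :
    ‖a - r • g‖ ^ 2 ≤ (1 - 2 * r / α) * ‖a‖ ^ 2 := by
  have hcross : r * (r - 2 / β) * ‖g‖ ^ 2 ≤ 0 :=
    mul_nonpos_of_nonpos_of_nonneg (mul_nonpos_of_nonneg_of_nonpos hr₀ (by linarith))
      (by positivity)
  calc ‖a - r • g‖ ^ 2 = ‖a‖ ^ 2 - 2 * r * RCLike.re (inner 𝕜 g a) + r ^ 2 * ‖g‖ ^ 2 := by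
        rw [RCLike.real_smul_eq_coe_smul (K := 𝕜), norm_sub_sq (𝕜 := 𝕜), inner_smul_real_right,
          RCLike.smul_re, inner_re_symm, norm_smul, RCLike.norm_ofReal, abs_of_nonneg hr₀]
        ring
    _ ≤ ‖a‖ ^ 2 - 2 * r * (1 / α * ‖a‖ ^ 2 + 1 / β * ‖g‖ ^ 2) + r ^ 2 * ‖g‖ ^ 2 := by
        gcongr
    _ = (1 - 2 * r / α) * ‖a‖ ^ 2 + r * (r - 2 / β) * ‖g‖ ^ 2 := by ring
    _ ≤ (1 - 2 * r / α) * ‖a‖ ^ 2 := by linarith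

theorem stmt11_general {Ny : ℕ} (α β : ℝ)
    (gradK : EuclideanSpace ℂ (Fin Ny) → EuclideanSpace ℂ (Fin Ny))
    (ystar : EuclideanSpace ℂ (Fin Ny)) (γ' : ℕ → ℝ)
    (hγ : ∀ l, 0 ≤ γ' l ∧ γ' l ≤ 2 / β)
    (y : ℕ → EuclideanSpace ℂ (Fin Ny))
    (hiter : ∀ l : ℕ, 1 ≤ l → y l = y (l - 1) - γ' l • gradK (y (l - 1)))
    (hreg : ∀ l : ℕ, 1 ≤ l →
      (1 / α) * ‖y (l - 1) - ystar‖ ^ 2 + (1 / β) * ‖gradK (y (l - 1))‖ ^ 2 ≤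
        (inner ℂ (gradK (y (l - 1))) (y (l - 1) - ystar) : ℂ).re)
    (hfac : ∀ l, 0 ≤ 1 - 2 * γ' l / α) :
    ∀ j : ℕ, 1 ≤ j →
      ‖y j - ystar‖ ^ 2 ≤
        (∏ l ∈ Finset.Icc 1 j, (1 - 2 * γ' l / α)) * ‖y 0 - ystar‖ ^ 2 := by
  have step (l : ℕ) :
      ‖y (l + 1) - ystar‖ ^ 2 ≤ (1 - 2 * γ' (l + 1) / α) * ‖y l - ystar‖ ^ 2 := by
    have hy : y (l + 1) - ystar = (y l - ystar) - γ' (l + 1) • gradK (y l) := by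
      rw [hiter (l + 1) l.succ_pos, Nat.add_sub_cancel, sub_right_comm]
    rw [hy]
    exact norm_sub_smul_sq_le_of_le_re_inner (𝕜 := ℂ) (hγ _).1 (hγ _).2
      (hreg (l + 1) l.succ_pos)
  exact fun j _ => le_prod_Icc_mul_of_le_mul (u := fun l => ‖y l - ystar‖ ^ 2) hfac step j

theorem stmt11 {Ny : ℕ} (α β : ℝ) (hα : 0 < α) (hβ : 0 < β)
    (gradK : EuclideanSpace ℂ (Fin Ny) → EuclideanSpace ℂ (Fin Ny))
    (ystar : EuclideanSpace ℂ (Fin Ny)) (γ' : ℕ → ℝ)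
    (hγ : ∀ l, 0 ≤ γ' l ∧ γ' l ≤ 2 / β)
    (y : ℕ → EuclideanSpace ℂ (Fin Ny))
    (hiter : ∀ l : ℕ, 1 ≤ l → y l = y (l - 1) - γ' l • gradK (y (l - 1)))
    (hreg : ∀ l : ℕ, 1 ≤ l →
      (1 / α) * ‖y (l - 1) - ystar‖ ^ 2 + (1 / β) * ‖gradK (y (l - 1))‖ ^ 2 ≤
        (inner ℂ (gradK (y (l - 1))) (y (l - 1) - ystar) : ℂ).re)
    (hfac : ∀ l, 0 ≤ 1 - 2 * γ' l / α) :
    ∀ j : ℕ, 1 ≤ j →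
      ‖y j - ystar‖ ^ 2 ≤
        (∏ l ∈ Finset.Icc 1 j, (1 - 2 * γ' l / α)) * ‖y 0 - ystar‖ ^ 2 :=
  stmt11_general α β gradK ystar γ' hγ y hiter hreg hfac
end
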